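/- Sum rule for the bipartite ferromagnet: for every m̄_σ, m̄_τ ∈ ℝ, A_N = A^{trial}(m̄_σ, m̄_τ) + ∫_0^1 R_N(t) dt, where A_N = (1/N) ln Σ_{σ,τ} e^{-H_N}, A^{trial}(m̄_σ, m̄_τ) = ln 2 + α ln cosh(β_σ α m̄_σ + β_{στ}(1-α) m̄_τ) + (1-α) ln cosh(β_{στ} α m̄_σ + β_τ(1-α) m̄_τ) - [β_{στ} α(1-α) m̄_σ m̄_τ + (β_σ/2)α² m̄_σ² + (β_τ/2)(1-α)² m̄_τ²], and R_N(t) = β_{στ} α(1-α)⟨(m_σ-m̄_σ)(m_τ-m̄_τ)⟩_t + (β_σ α²/2)⟨(m_σ-m̄_σ)²⟩_t + (β_τ(1-α)²/2)⟨(m_τ-m̄_τ)²⟩_t. -/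

import Mathlib

open Real Finset

/-- A Boolean spin mapped to ±1. -/
noncomputable def spin (b : Bool) : ℝ := if b then 1 else -1

/-- Total spin of a configuration. -/
noncomputable def tot {n : ℕ} (σ : Fin n → Bool) : ℝ := ∑ i, spin (σ i)

/-- Magnetization of a configuration. -/
noncomputable def mag {n : ℕ} (σ : Fin n → Bool) : ℝ := tot σ / (n : ℝ)

/-- Minus the interpolating Hamiltonian: `-H_N(t)`. Note `Σ_{ij} σ_i τ_j = (Σσ)(Στ)`,
`Σ_{ij} σ_i σ_j = (Σσ)²`, etc. -/
noncomputable def Eint (Nσ Nτ : ℕ) (βσ βτ βστ Cσ Cτ t : ℝ)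
    (σ : Fin Nσ → Bool) (τ : Fin Nτ → Bool) : ℝ :=
  t * (βστ / ((Nσ : ℝ) + (Nτ : ℝ)) * (tot σ * tot τ)
      + βσ / (2 * ((Nσ : ℝ) + (Nτ : ℝ))) * (tot σ) ^ 2
      + βτ / (2 * ((Nσ : ℝ) + (Nτ : ℝ))) * (tot τ) ^ 2)
    + (1 - t) * (Cσ * tot σ + Cτ * tot τ)

/-- Interpolating partition function. -/
noncomputable def Zint (Nσ Nτ : ℕ) (βσ βτ βστ Cσ Cτ t : ℝ) : ℝ :=
  ∑ σ : Fin Nσ → Bool, ∑ τ : Fin Nτ → Bool, Real.exp (Eint Nσ Nτ βσ βτ βστ Cσ Cτ t σ τ)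

/-- Interpolating pressure `A_N(t) = (1/N) ln Z_N(t)`. -/
noncomputable def Aint (Nσ Nτ : ℕ) (βσ βτ βστ Cσ Cτ t : ℝ) : ℝ :=
  (1 / ((Nσ : ℝ) + (Nτ : ℝ))) * Real.log (Zint Nσ Nτ βσ βτ βστ Cσ Cτ t)

/-- Gibbs average `⟨O⟩_t` with the interpolating weight. -/
noncomputable def gibbs (Nσ Nτ : ℕ) (βσ βτ βστ Cσ Cτ t : ℝ)
    (O : (Fin Nσ → Bool) → (Fin Nτ → Bool) → ℝ) : ℝ :=
  (∑ σ : Fin Nσ → Bool, ∑ τ : Fin Nτ → Bool,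
      O σ τ * Real.exp (Eint Nσ Nτ βσ βτ βστ Cσ Cτ t σ τ)) / Zint Nσ Nτ βσ βτ βστ Cσ Cτ t

/-- Trial pressure of the fully interacting bipartite ferromagnet. -/
noncomputable def Atrial (α βσ βτ βστ mσ mτ : ℝ) : ℝ :=
  Real.log 2 + α * Real.log (Real.cosh (βσ * α * mσ + βστ * (1 - α) * mτ))
    + (1 - α) * Real.log (Real.cosh (βστ * α * mσ + βτ * (1 - α) * mτ))
    - (βστ * α * (1 - α) * mσ * mτ + (βσ / 2) * α ^ 2 * mσ ^ 2
        + (βτ / 2) * (1 - α) ^ 2 * mτ ^ 2)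

/-!
Along the interpolation `-H_N(t)` is affine in `t`, so `A_N'(t)` is `1/N` times the Gibbs
average of `-H_N + C_σ Σσ + C_τ Στ`. Because `C_σ, C_τ` are the mean fields generated by
`(m̄_σ, m̄_τ)`, completing the square rewrites this observable, configuration by configuration,
as the fluctuation integrand of `R_N` minus the constant
`β_{στ} α (1-α) m̄_σ m̄_τ + (β_σ/2) α² m̄_σ² + (β_τ/2) (1-α)² m̄_τ²`. At `t = 0` the spins
decouple, `Z_N(0) = (2 cosh C_σ)^{N_σ} (2 cosh C_τ)^{N_τ}`, and the fundamental theorem of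
calculus assembles the sum rule.
-/

lemma natCast_mul_mag {n : ℕ} (σ : Fin n → Bool) : (n : ℝ) * mag σ = tot σ := by
  rcases n.eq_zero_or_pos with rfl | hn
  · simp [tot]
  · unfold mag
    field_simp

lemma sum_exp_mul_tot (n : ℕ) (C : ℝ) :
    ∑ σ : Fin n → Bool, exp (C * tot σ) = (2 * cosh C) ^ n := by
  have h2cosh : 2 * cosh C = ∑ b : Bool, exp (C * spin b) := by
    simp [spin, cosh_eq]
    ring
  simp only [h2cosh, Fintype.sum_pow, tot, mul_sum, exp_sum]

section Interpolation

variable (Nσ Nτ : ℕ) (βσ βτ βστ Cσ Cτ : ℝ)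

lemma hasDerivAt_Eint (t : ℝ) (σ : Fin Nσ → Bool) (τ : Fin Nτ → Bool) :
    HasDerivAt (fun s => Eint Nσ Nτ βσ βτ βστ Cσ Cτ s σ τ)
      (Eint Nσ Nτ βσ βτ βστ Cσ Cτ 1 σ τ - Eint Nσ Nτ βσ βτ βστ Cσ Cτ 0 σ τ) t := by
  have hAffine : (fun s => Eint Nσ Nτ βσ βτ βστ Cσ Cτ s σ τ) = fun s =>
      s * (Eint Nσ Nτ βσ βτ βστ Cσ Cτ 1 σ τ - Eint Nσ Nτ βσ βτ βστ Cσ Cτ 0 σ τ)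
        + Eint Nσ Nτ βσ βτ βστ Cσ Cτ 0 σ τ := by
    funext s
    simp only [Eint]
    ring
  rw [hAffine]
  exact ((hasDerivAt_id t).mul_const _).add_const _ |>.congr_deriv (one_mul _)

lemma Zint_pos (t : ℝ) : 0 < Zint Nσ Nτ βσ βτ βστ Cσ Cτ t :=
  sum_pos (fun _ _ => sum_pos (fun _ _ => exp_pos _) univ_nonempty) univ_nonempty

lemma gibbs_add (t : ℝ) (O₁ O₂ : (Fin Nσ → Bool) → (Fin Nτ → Bool) → ℝ) :
    gibbs Nσ Nτ βσ βτ βστ Cσ Cτ t (fun σ τ => O₁ σ τ + O₂ σ τ)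
      = gibbs Nσ Nτ βσ βτ βστ Cσ Cτ t O₁ + gibbs Nσ Nτ βσ βτ βστ Cσ Cτ t O₂ := by
  simp only [gibbs, add_mul, sum_add_distrib, add_div]

lemma gibbs_const_mul (t c : ℝ) (O : (Fin Nσ → Bool) → (Fin Nτ → Bool) → ℝ) :
    gibbs Nσ Nτ βσ βτ βστ Cσ Cτ t (fun σ τ => c * O σ τ)
      = c * gibbs Nσ Nτ βσ βτ βστ Cσ Cτ t O := by
  simp only [gibbs, mul_assoc, ← mul_sum, mul_div_assoc]

lemma gibbs_const (t c : ℝ) : gibbs Nσ Nτ βσ βτ βστ Cσ Cτ t (fun _ _ => c) = c := by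
  simp only [gibbs, ← mul_sum]
  exact mul_div_cancel_right₀ c (Zint_pos Nσ Nτ βσ βτ βστ Cσ Cτ t).ne'

lemma continuous_gibbs (O : (Fin Nσ → Bool) → (Fin Nτ → Bool) → ℝ) :
    Continuous fun t => gibbs Nσ Nτ βσ βτ βστ Cσ Cτ t O := by
  have hE : ∀ σ τ, Continuous fun t => Eint Nσ Nτ βσ βτ βστ Cσ Cτ t σ τ := fun σ τ =>
    continuous_iff_continuousAt.2 fun t => (hasDerivAt_Eint Nσ Nτ βσ βτ βστ Cσ Cτ t σ τ).continuousAt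
  refine Continuous.div ?_ ?_ fun t => (Zint_pos Nσ Nτ βσ βτ βστ Cσ Cτ t).ne'
  all_goals
    refine continuous_finsetSum _ fun σ _ => continuous_finsetSum _ fun τ _ => ?_
    fun_prop

lemma hasDerivAt_Aint (t : ℝ) :
    HasDerivAt (fun s => Aint Nσ Nτ βσ βτ βστ Cσ Cτ s)
      (1 / ((Nσ : ℝ) + (Nτ : ℝ)) * gibbs Nσ Nτ βσ βτ βστ Cσ Cτ t
        (fun σ τ => Eint Nσ Nτ βσ βτ βστ Cσ Cτ 1 σ τ - Eint Nσ Nτ βσ βτ βστ Cσ Cτ 0 σ τ)) t := by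
  have hZ : HasDerivAt (fun s => Zint Nσ Nτ βσ βτ βστ Cσ Cτ s)
      (∑ σ : Fin Nσ → Bool, ∑ τ : Fin Nτ → Bool,
        (Eint Nσ Nτ βσ βτ βστ Cσ Cτ 1 σ τ - Eint Nσ Nτ βσ βτ βστ Cσ Cτ 0 σ τ)
          * exp (Eint Nσ Nτ βσ βτ βστ Cσ Cτ t σ τ)) t := by
    refine HasDerivAt.fun_sum fun σ _ => HasDerivAt.fun_sum fun τ _ => ?_
    exact (hasDerivAt_Eint Nσ Nτ βσ βτ βστ Cσ Cτ t σ τ).exp.congr_deriv (mul_comm _ _)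
  exact (hZ.log (Zint_pos Nσ Nτ βσ βτ βστ Cσ Cτ t).ne').const_mul _

lemma Zint_zero :
    Zint Nσ Nτ βσ βτ βστ Cσ Cτ 0 = (2 * cosh Cσ) ^ Nσ * (2 * cosh Cτ) ^ Nτ := by
  have hFactor : ∀ (σ : Fin Nσ → Bool) (τ : Fin Nτ → Bool),
      exp (Eint Nσ Nτ βσ βτ βστ Cσ Cτ 0 σ τ) = exp (Cσ * tot σ) * exp (Cτ * tot τ) := by
    intro σ τ
    rw [← exp_add, Eint]
    ring_nf
  simp only [Zint, hFactor, ← mul_sum, ← sum_mul, sum_exp_mul_tot]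

lemma Aint_zero {α : ℝ} (hN : (Nσ : ℝ) + Nτ ≠ 0) (hα : α = Nσ / ((Nσ : ℝ) + Nτ)) :
    Aint Nσ Nτ βσ βτ βστ Cσ Cτ 0
      = log 2 + α * log (cosh Cσ) + (1 - α) * log (cosh Cτ) := by
  have h1α : 1 - α = Nτ / ((Nσ : ℝ) + Nτ) := by rw [hα, one_sub_div hN, add_sub_cancel_left]
  have hcosh (C : ℝ) : log (2 * cosh C) = log 2 + log (cosh C) :=
    log_mul two_ne_zero (cosh_pos C).ne'
  rw [Aint, Zint_zero, log_mul (by positivity) (by positivity), log_pow, log_pow, hcosh, hcosh,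
    h1α, hα]
  field_simp
  ring

lemma fluctuation_eq_deriv_add {α mbσ mbτ : ℝ} (hN : (Nσ : ℝ) + Nτ ≠ 0)
    (hα : α = Nσ / ((Nσ : ℝ) + Nτ))
    (hCσ : Cσ = α * βσ * mbσ + βστ * (1 - α) * mbτ)
    (hCτ : Cτ = βστ * α * mbσ + (1 - α) * βτ * mbτ) (t : ℝ) :
    βστ * α * (1 - α) *
        gibbs Nσ Nτ βσ βτ βστ Cσ Cτ t (fun σ τ => (mag σ - mbσ) * (mag τ - mbτ))
      + βσ * α ^ 2 / 2 * gibbs Nσ Nτ βσ βτ βστ Cσ Cτ t (fun σ _ => (mag σ - mbσ) ^ 2)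
      + βτ * (1 - α) ^ 2 / 2 * gibbs Nσ Nτ βσ βτ βστ Cσ Cτ t (fun _ τ => (mag τ - mbτ) ^ 2)
    = 1 / ((Nσ : ℝ) + Nτ) * gibbs Nσ Nτ βσ βτ βστ Cσ Cτ t
          (fun σ τ => Eint Nσ Nτ βσ βτ βστ Cσ Cτ 1 σ τ - Eint Nσ Nτ βσ βτ βστ Cσ Cτ 0 σ τ)
      + (βστ * α * (1 - α) * mbσ * mbτ + (βσ / 2) * α ^ 2 * mbσ ^ 2
          + (βτ / 2) * (1 - α) ^ 2 * mbτ ^ 2) := by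
  have hObservable : ∀ (σ : Fin Nσ → Bool) (τ : Fin Nτ → Bool),
      βστ * α * (1 - α) * ((mag σ - mbσ) * (mag τ - mbτ))
        + βσ * α ^ 2 / 2 * (mag σ - mbσ) ^ 2 + βτ * (1 - α) ^ 2 / 2 * (mag τ - mbτ) ^ 2
      = 1 / ((Nσ : ℝ) + Nτ)
          * (Eint Nσ Nτ βσ βτ βστ Cσ Cτ 1 σ τ - Eint Nσ Nτ βσ βτ βστ Cσ Cτ 0 σ τ)
        + (βστ * α * (1 - α) * mbσ * mbτ + (βσ / 2) * α ^ 2 * mbσ ^ 2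
          + (βτ / 2) * (1 - α) ^ 2 * mbτ ^ 2) := by
    intro σ τ
    have h1α : 1 - α = Nτ / ((Nσ : ℝ) + Nτ) := by rw [hα, one_sub_div hN, add_sub_cancel_left]
    simp only [Eint, ← natCast_mul_mag, hCσ, hCτ]
    rw [h1α, hα]
    field_simp
    ring
  simp only [← gibbs_const_mul, ← gibbs_add, hObservable]
  rw [gibbs_add, gibbs_const_mul, gibbs_const]

end Interpolation

theorem ferro_sum_rule_general (Nσ Nτ : ℕ) (hσ : 1 ≤ Nσ)
    (βσ βτ βστ α mbσ mbτ Cσ Cτ : ℝ)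
    (hα : α = (Nσ : ℝ) / ((Nσ : ℝ) + (Nτ : ℝ)))
    (hCσ : Cσ = α * βσ * mbσ + βστ * (1 - α) * mbτ)
    (hCτ : Cτ = βστ * α * mbσ + (1 - α) * βτ * mbτ) :
    Aint Nσ Nτ βσ βτ βστ Cσ Cτ 1
      = Atrial α βσ βτ βστ mbσ mbτ +
        ∫ t in (0:ℝ)..1,
          (βστ * α * (1 - α) *
              gibbs Nσ Nτ βσ βτ βστ Cσ Cτ t (fun σ τ => (mag σ - mbσ) * (mag τ - mbτ))
            + βσ * α ^ 2 / 2 *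
              gibbs Nσ Nτ βσ βτ βστ Cσ Cτ t (fun σ _ => (mag σ - mbσ) ^ 2)
            + βτ * (1 - α) ^ 2 / 2 *
              gibbs Nσ Nτ βσ βτ βστ Cσ Cτ t (fun _ τ => (mag τ - mbτ) ^ 2)) := by
  have hN : (Nσ : ℝ) + Nτ ≠ 0 := by
    norm_cast
    omega
  have hIntegrable (O : (Fin Nσ → Bool) → (Fin Nτ → Bool) → ℝ) :
      IntervalIntegrable (fun t => 1 / ((Nσ : ℝ) + Nτ) * gibbs Nσ Nτ βσ βτ βστ Cσ Cτ t O)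
        MeasureTheory.volume 0 1 :=
    (continuous_const.mul (continuous_gibbs Nσ Nτ βσ βτ βστ Cσ Cτ O)).intervalIntegrable 0 1
  rw [intervalIntegral.integral_congr fun t _ =>
      fluctuation_eq_deriv_add Nσ Nτ βσ βτ βστ Cσ Cτ hN hα hCσ hCτ t,
    intervalIntegral.integral_add (hIntegrable _) intervalIntegrable_const,
    intervalIntegral.integral_eq_sub_of_hasDerivAt
      (fun t _ => hasDerivAt_Aint Nσ Nτ βσ βτ βστ Cσ Cτ t) (hIntegrable _),
    Aint_zero Nσ Nτ βσ βτ βστ Cσ Cτ hN hα, Atrial, intervalIntegral.integral_const]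
  have hCσ' : βσ * α * mbσ + βστ * (1 - α) * mbτ = Cσ := by rw [hCσ]; ring
  have hCτ' : βστ * α * mbσ + βτ * (1 - α) * mbτ = Cτ := by rw [hCτ]; ring
  rw [hCσ', hCτ', sub_zero, one_smul]
  ring

/-- Sum rule for the bipartite ferromagnet: the pressure (interpolation at `t = 1`,
which is the pressure of the original model) equals the trial pressure plus the
integrated fluctuation rest. -/
theorem ferro_sum_rule (Nσ Nτ : ℕ) (hσ : 1 ≤ Nσ) (hτ : 1 ≤ Nτ)
    (βσ βτ βστ α mbσ mbτ Cσ Cτ : ℝ)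
    (hα : α = (Nσ : ℝ) / ((Nσ : ℝ) + (Nτ : ℝ)))
    (hCσ : Cσ = α * βσ * mbσ + βστ * (1 - α) * mbτ)
    (hCτ : Cτ = βστ * α * mbσ + (1 - α) * βτ * mbτ) :
    Aint Nσ Nτ βσ βτ βστ Cσ Cτ 1
      = Atrial α βσ βτ βστ mbσ mbτ +
        ∫ t in (0:ℝ)..1,
          (βστ * α * (1 - α) *
              gibbs Nσ Nτ βσ βτ βστ Cσ Cτ t (fun σ τ => (mag σ - mbσ) * (mag τ - mbτ))
            + βσ * α ^ 2 / 2 *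
              gibbs Nσ Nτ βσ βτ βστ Cσ Cτ t (fun σ _ => (mag σ - mbσ) ^ 2)
            + βτ * (1 - α) ^ 2 / 2 *
              gibbs Nσ Nτ βσ βτ βστ Cσ Cτ t (fun _ τ => (mag τ - mbτ) ^ 2)) :=
  ferro_sum_rule_general Nσ Nτ hσ βσ βτ βστ α mbσ mbτ Cσ Cτ hα hCσ hCτ
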